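/- Let u: [0,∞) → ℝ be integrable with ∫₀^∞ x·u(x) dx = M₁ < ∞ and u ≥ 0, and let a > 0. Then (1/(2√(π a)))·∫₀^∞ (e^{-(x-s)²/(4a)} - e^{-(x+s)²/(4a)})·u(s) ds ≤ M₁/(√(2eπ)·a) for every x ≥ 0. -/

import Mathlib

/-! The Gaussian `t ↦ exp (-t² / (4a))` is `1 / √(2ea)`-Lipschitz: its derivative has
modulus `|t| / (2a) · exp (-t² / (4a))`, whose square is `(2a)⁻¹ · y e^{-y}` with
`y = t² / (2a)`, and `y e^{-y} ≤ e⁻¹`. Hence for `x, s ≥ 0` the kernel difference at `x - s`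
and `x + s` lies between `0` and `2s / √(2ea)`; integrating against `u ≥ 0` turns `s` into
the first moment `M₁`. -/

open MeasureTheory Real

lemma hasDerivAt_exp_neg_sq_div (a t : ℝ) :
    HasDerivAt (fun t => exp (-t ^ 2 / (4 * a))) (-(t / (2 * a) * exp (-t ^ 2 / (4 * a)))) t := by
  have h := ((hasDerivAt_pow 2 t).neg.div_const (4 * a)).exp
  convert h using 1
  · ext t; simp [neg_div]
  · simp only [Pi.neg_apply, Nat.cast_ofNat]
    ring

lemma abs_div_mul_exp_neg_sq_div_le {a : ℝ} (ha : 0 < a) (t : ℝ) :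
    |t / (2 * a) * exp (-t ^ 2 / (4 * a))| ≤ (√(2 * exp 1 * a))⁻¹ := by
  rw [← sqrt_inv, le_sqrt (abs_nonneg _) (by positivity), sq_abs]
  calc _ = (2 * a)⁻¹ * (t ^ 2 / (2 * a) * exp (-(t ^ 2 / (2 * a)))) := by
        rw [mul_pow, ← exp_nat_mul]
        field_simp
        ring_nf
    _ ≤ (2 * a)⁻¹ * exp (-1) := by gcongr; exact mul_exp_neg_le_exp_neg_one _
    _ = (2 * exp 1 * a)⁻¹ := by rw [exp_neg]; ring

lemma abs_exp_neg_sq_div_sub_le {a : ℝ} (ha : 0 < a) (y z : ℝ) :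
    |exp (-y ^ 2 / (4 * a)) - exp (-z ^ 2 / (4 * a))| ≤ (√(2 * exp 1 * a))⁻¹ * |y - z| :=
  convex_univ.norm_image_sub_le_of_norm_hasDerivWithin_le
    (fun t _ => (hasDerivAt_exp_neg_sq_div a t).hasDerivWithinAt)
    (fun t _ => by rw [norm_neg]; exact abs_div_mul_exp_neg_sq_div_le ha t)
    (Set.mem_univ z) (Set.mem_univ y)

lemma exp_neg_sub_sq_div_sub_exp_neg_add_sq_div_le {a : ℝ} (ha : 0 < a) (x s : ℝ) :
    exp (-(x - s) ^ 2 / (4 * a)) - exp (-(x + s) ^ 2 / (4 * a)) ≤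
      2 * |s| / √(2 * exp 1 * a) :=
  calc _ ≤ |exp (-(x - s) ^ 2 / (4 * a)) - exp (-(x + s) ^ 2 / (4 * a))| := le_abs_self _
    _ ≤ (√(2 * exp 1 * a))⁻¹ * |x - s - (x + s)| := abs_exp_neg_sq_div_sub_le ha _ _
    _ = 2 * |s| / √(2 * exp 1 * a) := by
      rw [show x - s - (x + s) = -2 * s by ring, abs_mul, abs_neg, abs_two]; ring

lemma exp_neg_add_sq_div_le_exp_neg_sub_sq_div {a x s : ℝ} (ha : 0 ≤ a) (hx : 0 ≤ x)
    (hs : 0 ≤ s) :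
    exp (-(x + s) ^ 2 / (4 * a)) ≤ exp (-(x - s) ^ 2 / (4 * a)) := by
  gcongr exp (?_ / _)
  nlinarith [mul_nonneg hx hs]

lemma one_div_two_sqrt_pi_mul_mul_two_div_sqrt {a : ℝ} (ha : 0 < a) :
    1 / (2 * √(π * a)) * (2 / √(2 * exp 1 * a)) = 1 / (√(2 * exp 1 * π) * a) := by
  have hprod : √(π * a) * √(2 * exp 1 * a) = √(2 * exp 1 * π) * a := by
    rw [← sqrt_mul (by positivity),
      show π * a * (2 * exp 1 * a) = 2 * exp 1 * π * a ^ 2 by ring,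
      sqrt_mul (by positivity), sqrt_sq ha.le]
  rw [← hprod]
  field_simp

theorem stmt_13_general (u : ℝ → ℝ) (hpos : ∀ s, 0 ≤ u s)
    (M₁ : ℝ) (hM₁ : M₁ = ∫ x in Set.Ioi (0 : ℝ), x * u x)
    (hmom : MeasureTheory.IntegrableOn (fun x => x * u x) (Set.Ioi 0))
    (a : ℝ) (ha : 0 < a) (x : ℝ) (hx : 0 ≤ x) :
    1 / (2 * Real.sqrt (Real.pi * a)) *
        ∫ s in Set.Ioi (0 : ℝ),
          (Real.exp (-(x - s) ^ 2 / (4 * a)) - Real.exp (-(x + s) ^ 2 / (4 * a))) * u s ≤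
      M₁ / (Real.sqrt (2 * Real.exp 1 * Real.pi) * a) := by
  set C := 2 / √(2 * exp 1 * a)
  have hbound : ∫ s in Set.Ioi (0 : ℝ),
      (exp (-(x - s) ^ 2 / (4 * a)) - exp (-(x + s) ^ 2 / (4 * a))) * u s ≤
      ∫ s in Set.Ioi (0 : ℝ), C * (s * u s) := by
    refine integral_mono_of_nonneg ?_ (hmom.const_mul C) ?_
    all_goals filter_upwards [ae_restrict_mem measurableSet_Ioi] with s (hs : 0 < s)
    · exact mul_nonneg (sub_nonneg.2 (exp_neg_add_sq_div_le_exp_neg_sub_sq_div ha.le hx hs.le))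
        (hpos s)
    · calc _ ≤ 2 * |s| / √(2 * exp 1 * a) * u s :=
            mul_le_mul_of_nonneg_right
              (exp_neg_sub_sq_div_sub_exp_neg_add_sq_div_le ha x s) (hpos s)
        _ = C * (s * u s) := by rw [abs_of_pos hs]; ring
  calc _ ≤ 1 / (2 * √(π * a)) * ∫ s in Set.Ioi (0 : ℝ), C * (s * u s) := by gcongr
    _ = 1 / (2 * √(π * a)) * C * M₁ := by rw [integral_const_mul, hM₁, mul_assoc]
    _ = M₁ / (√(2 * exp 1 * π) * a) := by
      rw [one_div_two_sqrt_pi_mul_mul_two_div_sqrt ha]; ring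

theorem stmt_13 (u : ℝ → ℝ) (hpos : ∀ s, 0 ≤ u s)
    (hint : MeasureTheory.IntegrableOn u (Set.Ioi 0))
    (M₁ : ℝ) (hM₁ : M₁ = ∫ x in Set.Ioi (0 : ℝ), x * u x)
    (hmom : MeasureTheory.IntegrableOn (fun x => x * u x) (Set.Ioi 0))
    (a : ℝ) (ha : 0 < a) (x : ℝ) (hx : 0 ≤ x) :
    1 / (2 * Real.sqrt (Real.pi * a)) *
        ∫ s in Set.Ioi (0 : ℝ),
          (Real.exp (-(x - s) ^ 2 / (4 * a)) - Real.exp (-(x + s) ^ 2 / (4 * a))) * u s ≤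
      M₁ / (Real.sqrt (2 * Real.exp 1 * Real.pi) * a) :=
  stmt_13_general u hpos M₁ hM₁ hmom a ha x hx
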